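/- Let I, J ∈ 𝓘_λ and suppose there exist p ∈ {1,…,N} and q ∈ {1,…,n} such that #{i ∈ J^{(p)} : i ≤ q} < #{i ∈ I^{(p)} : i ≤ q} (the combinatorial condition expressing that the Schubert cell Ω_J is not contained in the closure of the Schubert cell Ω_I in the partial flag manifold). Then the substitution of the weight function vanishes identically: W_I(z_J,z) = 0 in ℚ[z_1,…,z_n]. -/

import Mathlib

open MvPolynomial

namespace WeightFn

/-- `clam lam k` is the partial sum `λ^{(k+1)} = λ_1 + … + λ_{k+1}` (`k` is 0-based). -/
def clam {N : ℕ} (lam : Fin N → ℕ) (k : ℕ) : ℕ :=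
  ∑ l : Fin N, if (l : ℕ) ≤ k then lam l else 0

/-- `cup I k` is the cumulative union `I^{(k+1)} = I_1 ∪ … ∪ I_{k+1}` (`k` is 0-based). -/
def cup {n N : ℕ} (I : Fin N → Finset (Fin n)) (k : ℕ) : Finset (Fin n) :=
  Finset.univ.biUnion fun l : Fin N => if (l : ℕ) ≤ k then I l else ∅

/-- `nth S a` is the value (as a natural number) of the `(a+1)`-st smallest element of `S`
(0-based `a`); junk value `0` if `a` is out of range. -/
def nth {n : ℕ} (S : Finset (Fin n)) (a : ℕ) : ℕ :=
  ((S.sort (· ≤ ·)).map Fin.val).getD a 0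

/-- Membership in `𝓘_λ`: an `N`-tuple of pairwise disjoint subsets of `{1,…,n}` with
`|I_k| = λ_k`. -/
def IdxTuple {n N : ℕ} (lam : Fin N → ℕ) (I : Fin N → Finset (Fin n)) : Prop :=
  (∀ k l : Fin N, k ≠ l → Disjoint (I k) (I l)) ∧ ∀ k, (I k).card = lam k

/-- The symmetrizing group `S^{(λ)} = S_{λ^{(1)}} × … × S_{λ^{(N-1)}}`. -/
abbrev SymGrp {N : ℕ} (lam : Fin N → ℕ) : Type :=
  ∀ k : Fin (N - 1), Equiv.Perm (Fin (clam lam (k : ℕ)))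

/-- The factor `ℓ^{(k+1)}_I(a,b)` (0-based `k`, `a`, `b`), where `u` is the value of
`t^{(k+1)}_a` and `v` the value of `t^{(k+2)}_b`: it is `1 + v - u` if
`i^{(k+2)}_b < i^{(k+1)}_a`, it is `v - u` if `i^{(k+2)}_b > i^{(k+1)}_a`
(and `1` in the remaining case `i^{(k+2)}_b = i^{(k+1)}_a`, where no factor occurs). -/
def lfac {n N : ℕ} {F : Type} [Field F] (I : Fin N → Finset (Fin n))
    (k a b : ℕ) (u v : F) : F :=
  if nth (cup I (k + 1)) b < nth (cup I k) a then 1 + v - u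
  else if nth (cup I k) a < nth (cup I (k + 1)) b then v - u
  else 1

/-- The variable in column `k+2` (0-based level `k+1`), lower index `b`, after applying the
symmetrizing permutation `σ`: it is a `t`-variable (given by the assignment `asn`) if
`k+1` is not the last column, and the `z`-variable `zf b` (convention `t^{(N)}_b = z_b`)
if it is. -/
def nextVar {N : ℕ} {F : Type} [Field F] (lam : Fin N → ℕ)
    (asn : ℕ → ℕ → F) (zf : ℕ → F) (σ : SymGrp lam)
    (k : Fin (N - 1)) (b : Fin (clam lam ((k : ℕ) + 1))) : F :=
  if h : (k : ℕ) + 1 < N - 1 then asn ((k : ℕ) + 1) ((σ ⟨(k : ℕ) + 1, h⟩) b).val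
  else zf (b : ℕ)

/-- The term of the weight function corresponding to `σ ∈ S^{(λ)}`, i.e. the function
`f(σ(t),z)` where `f` is the expression inside the symmetrization `Sym_λ` in the definition
of the weight function `W_I`.  The values of the `t`-variables are given by the assignment
`asn` (level, lower index) and those of the `z`-variables by `zf`. -/
def termW {n N : ℕ} {F : Type} [Field F] (lam : Fin N → ℕ)
    (I : Fin N → Finset (Fin n)) (asn : ℕ → ℕ → F) (zf : ℕ → F)
    (σ : SymGrp lam) : F :=
  ∏ k : Fin (N - 1),
    ((∏ a : Fin (clam lam (k : ℕ)), ∏ b : Fin (clam lam ((k : ℕ) + 1)),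
        lfac I (k : ℕ) (a : ℕ) (b : ℕ) (asn (k : ℕ) ((σ k) a).val)
          (nextVar lam asn zf σ k b)) *
      ∏ a : Fin (clam lam (k : ℕ)), ∏ b : Fin (clam lam (k : ℕ)),
        if (a : ℕ) < (b : ℕ) then
          (1 + asn (k : ℕ) ((σ k) b).val - asn (k : ℕ) ((σ k) a).val) /
            (asn (k : ℕ) ((σ k) b).val - asn (k : ℕ) ((σ k) a).val)
        else 1)

/-- The field `ℚ(z_1,…,z_n)` (more generally `F(z_1,…,z_n)`). -/
abbrev Kz (n : ℕ) (F : Type) [Field F] : Type := FractionRing (MvPolynomial (Fin n) F)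

/-- The variable `z_{b+1}` (0-based index `b : ℕ`) as an element of `F(z_1,…,z_n)`;
junk value `0` if `b` is out of range. -/
noncomputable def zX (n : ℕ) (F : Type) [Field F] (b : ℕ) : Kz n F :=
  if h : b < n then algebraMap (MvPolynomial (Fin n) F) (Kz n F) (X ⟨b, h⟩) else 0

/-- The substitution `W_I(z_J, z)` of the weight function at `J ∈ 𝓘_λ`: in each term of the
symmetrization, the variable `t^{(k)}_a` is replaced by `z_{j^{(k)}_a}`, where
`J^{(k)} = {j^{(k)}_1 < … < j^{(k)}_{λ^{(k)}}}`. -/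
noncomputable def Wsub {N : ℕ} (n : ℕ) (F : Type) [Field F] (lam : Fin N → ℕ)
    (I J : Fin N → Finset (Fin n)) : Kz n F :=
  ∑ σ : SymGrp lam, termW lam I (fun k a => zX n F (nth (cup J k) a)) (zX n F) σ

/-- The polynomial `c_J(z) = ∏_{k<l} ∏_{a ∈ J_k, b ∈ J_l, a > b} (1 + z_b - z_a)`,
the total Chern class of the tangent space of the Schubert cell `Ω_J` at `x_J`. -/
noncomputable def cPoly {n N : ℕ} (F : Type) [Field F] (J : Fin N → Finset (Fin n)) :
    MvPolynomial (Fin n) F :=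
  ∏ k : Fin N, ∏ l : Fin N,
    if k < l then (∏ a ∈ J k, ∏ b ∈ J l, if b < a then (1 + X b - X a) else 1) else 1

/-- The polynomial `e^N_J(z) = ∏_{k<l} ∏_{a ∈ J_k, b ∈ J_l, b > a} (z_b - z_a)`,
the Euler class of the normal space of the Schubert cell `Ω_J` at `x_J`. -/
noncomputable def eNPoly {n N : ℕ} (F : Type) [Field F] (J : Fin N → Finset (Fin n)) :
    MvPolynomial (Fin n) F :=
  ∏ k : Fin N, ∏ l : Fin N,
    if k < l then (∏ a ∈ J k, ∏ b ∈ J l, if a < b then (X b - X a) else 1) else 1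

/-- The substitution `e_λ(z_J) = ∏_{k=1}^{N-1} ∏_{a ∈ J^{(k)}} ∏_{b ∈ J^{(k)}} (1 + z_b - z_a)`
of `e_λ(t)` at `J ∈ 𝓘_λ`. -/
noncomputable def elamSub {n N : ℕ} (F : Type) [Field F] (J : Fin N → Finset (Fin n)) :
    MvPolynomial (Fin n) F :=
  ∏ k ∈ Finset.range (N - 1), ∏ a ∈ cup J k, ∏ b ∈ cup J k, (1 + X b - X a)

/-- `dim Fl_λ = ∑_{k<l} λ_k · λ_l`, the dimension of the partial flag manifold. -/
def dimFl {N : ℕ} (lam : Fin N → ℕ) : ℕ :=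
  ∑ k : Fin N, ∑ l : Fin N, if k < l then lam k * lam l else 0

section Aux

variable {n N : ℕ}

lemma nth_eq_orderEmb (S : Finset (Fin n)) {c : ℕ} (h : S.card = c) (i : Fin c) :
    nth S (i : ℕ) = ((S.orderEmbOfFin h i : Fin n) : ℕ) := by
  rw [nth, Finset.orderEmbOfFin_apply, List.getD_eq_getElem _ _ (by simp [h])]
  simp

lemma cup_card (lam : Fin N → ℕ) {J : Fin N → Finset (Fin n)} (hJ : IdxTuple lam J) (k : ℕ) :
    (cup J k).card = clam lam k := by
  rw [cup, Finset.card_biUnion, clam]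
  · exact Finset.sum_congr rfl fun l _ => by split <;> simp [hJ.2 l]
  · intro x _ y _ hxy
    simp only [Function.onFun]
    split <;> split <;> simp [hJ.1 x y hxy]

lemma cup_mono (J : Fin N → Finset (Fin n)) {k k' : ℕ} (h : k ≤ k') : cup J k ⊆ cup J k' := by
  intro x hx
  simp only [cup, Finset.mem_biUnion] at hx ⊢
  obtain ⟨l, hl, hxl⟩ := hx
  refine ⟨l, hl, ?_⟩
  split at hxl
  · rw [if_pos (le_trans ‹_› h)]; exact hxl
  · simp at hxl

lemma clam_last (lam : Fin N → ℕ) {k : ℕ} (hk : N - 1 ≤ k) :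
    clam lam k = ∑ l, lam l := by
  refine Finset.sum_congr rfl fun l _ => ?_
  rw [if_pos (le_trans (Nat.le_sub_one_of_lt l.isLt) hk)]

lemma cup_last (lam : Fin N → ℕ) (hsum : ∑ k, lam k = n) {J : Fin N → Finset (Fin n)}
    (hJ : IdxTuple lam J) {k : ℕ} (hk : N - 1 ≤ k) : cup J k = Finset.univ :=
  Finset.eq_univ_of_card _ (by
    rw [cup_card lam hJ, clam_last lam hk, hsum, Fintype.card_fin])

lemma nth_univ {b : ℕ} (hb : b < n) : nth (Finset.univ : Finset (Fin n)) b = b := by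
  have hcard : (Finset.univ : Finset (Fin n)).card = n := Finset.card_fin n
  have hid : (id : Fin n → Fin n) = Finset.univ.orderEmbOfFin hcard :=
    Finset.orderEmbOfFin_unique hcard (fun x => Finset.mem_univ x) strictMono_id
  have := nth_eq_orderEmb Finset.univ hcard ⟨b, hb⟩
  rw [← hid] at this
  simpa using this

lemma count_le {c : ℕ} (S : Finset (Fin n)) (f : Fin c → Fin n)
    (hinj : Function.Injective f) (hmem : ∀ a, f a ∈ S) (hcard : S.card = c) (q : Fin n) :
    (S.filter (fun i => i ≤ q)).card = (Finset.univ.filter (fun a => f a ≤ q)).card := by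
  have hsurj : ∀ x ∈ S, ∃ a, f a = x := by
    have himg : Finset.univ.image f = S := by
      apply Finset.eq_of_subset_of_card_le
      · intro x hx
        simp only [Finset.mem_image] at hx
        obtain ⟨a, -, rfl⟩ := hx
        exact hmem a
      · rw [Finset.card_image_of_injective _ hinj, Finset.card_univ, Fintype.card_fin, hcard]
    intro x hx
    rw [← himg] at hx
    simpa using hx
  symm
  apply Finset.card_bij (fun a _ => f a)
  · intro a ha
    simp only [Finset.mem_filter, Finset.mem_univ, true_and] at ha ⊢
    exact ⟨hmem a, ha⟩
  · intro a _ b _ hab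
    exact hinj hab
  · intro x hx
    simp only [Finset.mem_filter] at hx
    obtain ⟨a, rfl⟩ := hsurj x hx.1
    exact ⟨a, by simp [hx.2], rfl⟩

/-- The `z`-index of the variable at level `k`, lower index `a`, after applying `σ`. -/
def jidx (lam : Fin N → ℕ) (J : Fin N → Finset (Fin n)) (σ : SymGrp lam) (k a : ℕ) : ℕ :=
  if h : k < N - 1 then
    (if ha : a < clam lam k then nth (cup J k) (((σ ⟨k, h⟩) ⟨a, ha⟩ : Fin (clam lam k)) : ℕ)
     else a)
  else a

variable {lam : Fin N → ℕ} {J : Fin N → Finset (Fin n)} (σ : SymGrp lam)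

lemma jidx_mem (hsum : ∑ k, lam k = n) (hJ : IdxTuple lam J)
    {k a : ℕ} (ha : a < clam lam k) :
    ∃ x ∈ cup J k, (x : ℕ) = jidx lam J σ k a := by
  rcases Nat.lt_or_ge k (N - 1) with h | h
  · rw [jidx, dif_pos h, dif_pos ha]
    have hcard : (cup J k).card = clam lam k := cup_card lam hJ k
    exact ⟨(cup J k).orderEmbOfFin hcard ((σ ⟨k, h⟩) ⟨a, ha⟩),
      Finset.orderEmbOfFin_mem _ _ _, (nth_eq_orderEmb _ hcard _).symm⟩
  · rw [jidx, dif_neg (not_lt.mpr h)]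
    have han : a < n := by rw [← hsum, ← clam_last lam h]; exact ha
    exact ⟨⟨a, han⟩, by simp [cup_last lam hsum hJ h], rfl⟩

lemma jidx_surj (hsum : ∑ k, lam k = n) (hJ : IdxTuple lam J)
    {k : ℕ} {x : Fin n} (hx : x ∈ cup J k) :
    ∃ a, a < clam lam k ∧ jidx lam J σ k a = (x : ℕ) := by
  rcases Nat.lt_or_ge k (N - 1) with h | h
  · have hcard : (cup J k).card = clam lam k := cup_card lam hJ k
    obtain ⟨i, hi⟩ : ∃ i, (cup J k).orderEmbOfFin hcard i = x := by
      have h2 := Finset.range_orderEmbOfFin (cup J k) hcard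
      rw [Set.ext_iff] at h2
      exact (h2 x).mpr hx
    refine ⟨((σ ⟨k, h⟩).symm i : Fin _), ((σ ⟨k, h⟩).symm i).isLt, ?_⟩
    rw [jidx, dif_pos h, dif_pos ((σ ⟨k, h⟩).symm i).isLt]
    have h3 : (σ ⟨k, h⟩) ⟨((σ ⟨k, h⟩).symm i : Fin _), ((σ ⟨k, h⟩).symm i).isLt⟩ = i := by
      simpa using (σ ⟨k, h⟩).apply_symm_apply i
    rw [h3, nth_eq_orderEmb _ hcard, hi]
  · refine ⟨(x : ℕ), ?_, ?_⟩
    · rw [clam_last lam h, hsum]; exact x.isLt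
    · rw [jidx, dif_neg (not_lt.mpr h)]

lemma jidx_inj (hsum : ∑ k, lam k = n) (hJ : IdxTuple lam J)
    {k a b : ℕ} (ha : a < clam lam k) (hb : b < clam lam k)
    (hab : jidx lam J σ k a = jidx lam J σ k b) : a = b := by
  rcases Nat.lt_or_ge k (N - 1) with h | h
  · rw [jidx, dif_pos h, dif_pos ha] at hab
    rw [jidx, dif_pos h, dif_pos hb] at hab
    have hcard : (cup J k).card = clam lam k := cup_card lam hJ k
    rw [nth_eq_orderEmb _ hcard, nth_eq_orderEmb _ hcard] at hab
    have := (σ ⟨k, h⟩).injective (((cup J k).orderEmbOfFin hcard).injective (Fin.val_injective hab))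
    simpa using this
  · rw [jidx, dif_neg (not_lt.mpr h)] at hab
    rw [jidx, dif_neg (not_lt.mpr h)] at hab
    exact hab

end Aux


lemma term_zero {n N : ℕ} (lam : Fin N → ℕ) (hsum : ∑ k, lam k = n)
    (I J : Fin N → Finset (Fin n)) (hI : IdxTuple lam I) (hJ : IdxTuple lam J)
    (h : ∃ p : Fin N, ∃ q : Fin n,
      ((cup J (p : ℕ)).filter (fun i => i ≤ q)).card <
        ((cup I (p : ℕ)).filter (fun i => i ≤ q)).card)
    (σ : SymGrp lam) :
    termW lam I (fun k a => zX n ℚ (nth (cup J k) a)) (zX n ℚ) σ = 0 := by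
  by_cases hex : ∃ (k : ℕ) (hk : k < N - 1) (a : Fin (clam lam k)) (b : Fin (clam lam (k + 1))),
      nth (cup I k) (a : ℕ) < nth (cup I (k + 1)) (b : ℕ) ∧
      jidx lam J σ (k + 1) (b : ℕ) = jidx lam J σ k (a : ℕ)
  · obtain ⟨k, hk, a, b, hlt, heq⟩ := hex
    rw [termW]
    refine Finset.prod_eq_zero (Finset.mem_univ (⟨k, hk⟩ : Fin (N - 1))) ?_
    rw [mul_eq_zero]
    left
    refine Finset.prod_eq_zero (Finset.mem_univ a) ?_
    refine Finset.prod_eq_zero (Finset.mem_univ b) ?_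
    have hu : zX n ℚ (nth (cup J k) (((σ ⟨k, hk⟩) a : Fin _) : ℕ)) =
        zX n ℚ (jidx lam J σ k (a : ℕ)) := by
      rw [jidx, dif_pos hk, dif_pos a.isLt]
    have hv : nextVar lam (fun k a => zX n ℚ (nth (cup J k) a)) (zX n ℚ) σ ⟨k, hk⟩ b =
        zX n ℚ (jidx lam J σ (k + 1) (b : ℕ)) := by
      rw [nextVar, jidx]
      by_cases h2 : k + 1 < N - 1
      · rw [dif_pos h2, dif_pos h2, dif_pos b.isLt]
      · rw [dif_neg h2, dif_neg h2]
    show lfac I k (a : ℕ) (b : ℕ)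
        (zX n ℚ (nth (cup J k) (((σ ⟨k, hk⟩) a : Fin _) : ℕ)))
        (nextVar lam (fun k a => zX n ℚ (nth (cup J k) a)) (zX n ℚ) σ ⟨k, hk⟩ b) = 0
    rw [hu, hv, lfac, if_neg (Nat.lt_asymm hlt), if_pos hlt, heq, sub_self]
  · exfalso
    push_neg at hex
    obtain ⟨p, q, hpq⟩ := h
    have hple : (p : ℕ) ≤ N - 1 := by have := p.isLt; omega
    have hex' : ∀ (k : ℕ), k < N - 1 → ∀ (a b : ℕ) (ha : a < clam lam k)
        (hb : b < clam lam (k + 1)),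
        jidx lam J σ (k + 1) b = jidx lam J σ k a →
        nth (cup I (k + 1)) b ≤ nth (cup I k) a := by
      intro k hk a b ha hb hj
      by_contra hcon
      exact hex k hk ⟨a, ha⟩ ⟨b, hb⟩ (not_le.mp hcon) hj
    have chain : ∀ k, (p : ℕ) ≤ k → k ≤ N - 1 → ∀ a : ℕ, a < clam lam (p : ℕ) →
        ∃ b, b < clam lam k ∧ jidx lam J σ k b = jidx lam J σ (p : ℕ) a ∧
          nth (cup I k) b ≤ nth (cup I (p : ℕ)) a := by
      intro k hk1
      induction k, hk1 using Nat.le_induction with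
      | base => exact fun _ a ha => ⟨a, ha, rfl, le_rfl⟩
      | succ k hk ih =>
        intro hk2 a ha
        have hkN : k < N - 1 := Nat.lt_of_succ_le hk2
        obtain ⟨b, hb, hjb, hnb⟩ := ih (le_of_lt hkN) a ha
        obtain ⟨x, hx, hxval⟩ := jidx_mem σ hsum hJ hb
        have hx' : x ∈ cup J (k + 1) := cup_mono J (Nat.le_succ k) hx
        obtain ⟨b', hb', hjb'⟩ := jidx_surj σ hsum hJ hx'
        have hstep : jidx lam J σ (k + 1) b' = jidx lam J σ k b := by
          rw [hjb', ← hxval]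
        exact ⟨b', hb', hstep.trans hjb,
          le_trans (hex' k hkN b b' hb hb' hstep) hnb⟩
    have hcI : (cup I (p : ℕ)).card = clam lam (p : ℕ) := cup_card lam hI _
    have hcJ : (cup J (p : ℕ)).card = clam lam (p : ℕ) := cup_card lam hJ _
    have star : ∀ a : Fin (clam lam (p : ℕ)), jidx lam J σ (p : ℕ) (a : ℕ) ≤
        (((cup I (p : ℕ)).orderEmbOfFin hcI a) : ℕ) := by
      intro a
      obtain ⟨b, hb, hjb, hnb⟩ := chain (N - 1) hple le_rfl a a.isLt
      have hbn : b < n := by rw [clam_last lam le_rfl, hsum] at hb; exact hb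
      have h1 : jidx lam J σ (N - 1) b = b := by rw [jidx, dif_neg (lt_irrefl _)]
      have h2 : nth (cup I (N - 1)) b = b := by
        rw [cup_last lam hsum hI le_rfl, nth_univ hbn]
      rw [h1] at hjb
      rw [h2] at hnb
      rw [← nth_eq_orderEmb _ hcI a, ← hjb]
      exact hnb
    choose fJ hfJmem hfJval using
      fun a : Fin (clam lam (p : ℕ)) => jidx_mem σ hsum hJ a.isLt
    have hfJinj : Function.Injective fJ := by
      intro a b hab
      exact Fin.ext (jidx_inj σ hsum hJ a.isLt b.isLt
        (by rw [← hfJval a, ← hfJval b, hab]))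
    have cI : ((cup I (p : ℕ)).filter (fun i => i ≤ q)).card =
        (Finset.univ.filter
          (fun a : Fin (clam lam (p : ℕ)) => (cup I (p : ℕ)).orderEmbOfFin hcI a ≤ q)).card :=
      count_le _ _ ((cup I (p : ℕ)).orderEmbOfFin hcI).injective
        (fun a => Finset.orderEmbOfFin_mem _ _ _) hcI q
    have cJ : ((cup J (p : ℕ)).filter (fun i => i ≤ q)).card =
        (Finset.univ.filter (fun a : Fin (clam lam (p : ℕ)) => fJ a ≤ q)).card :=
      count_le _ fJ hfJinj hfJmem hcJ q
    have hsub : (Finset.univ.filter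
          (fun a : Fin (clam lam (p : ℕ)) => (cup I (p : ℕ)).orderEmbOfFin hcI a ≤ q)) ⊆
        (Finset.univ.filter (fun a : Fin (clam lam (p : ℕ)) => fJ a ≤ q)) := by
      intro a ha
      simp only [Finset.mem_filter, Finset.mem_univ, true_and] at ha ⊢
      have h1 : (fJ a : ℕ) ≤ (((cup I (p : ℕ)).orderEmbOfFin hcI a) : ℕ) :=
        (hfJval a) ▸ star a
      rw [Fin.le_def] at ha ⊢
      omega
    have hle := Finset.card_le_card hsub
    omega

/-- Let `I, J ∈ 𝓘_λ` and suppose there are `p ∈ {1,…,N}` and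
`q ∈ {1,…,n}` with `#{i ∈ J^{(p)} : i ≤ q} < #{i ∈ I^{(p)} : i ≤ q}` (the combinatorial
condition expressing that the Schubert cell `Ω_J` is not contained in the closure of
`Ω_I`).  Then the substitution of the weight function vanishes identically:
`W_I(z_J, z) = 0` in `ℚ[z_1,…,z_n]`. -/
theorem weight_function_vanishing (n N : ℕ) (hN : 1 ≤ N)
    (lam : Fin N → ℕ) (hsum : ∑ k, lam k = n)
    (I J : Fin N → Finset (Fin n)) (hI : IdxTuple lam I) (hJ : IdxTuple lam J)
    (h : ∃ p : Fin N, ∃ q : Fin n,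
      ((cup J (p : ℕ)).filter (fun i => i ≤ q)).card <
        ((cup I (p : ℕ)).filter (fun i => i ≤ q)).card) :
    Wsub n ℚ lam I J = 0 := by
  rw [Wsub]
  exact Finset.sum_eq_zero fun σ _ => term_zero lam hsum I J hI hJ h σ

end WeightFn
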